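/- arXiv:1404.4835 — 2 statements merged into one kernel-verified Lean document; each statement's English description precedes it below -/
import Mathlib

section
/- Let G be a finite non-abelian group with m(G) < k(G) - 1. Then G is a rational group. -/
/-!
If `x` were not conjugate to `x ^ m` for some `m` coprime to the order of `x`, then, since
`m(G) ≤ k(G) - 2`, one could pick `m(G)` non-trivial classes containing the class of `x` but
avoiding the class of `x ^ m`. Their union with `1` is a subgroup, so it contains `x ^ m`,
which is neither `1` nor in any of the chosen classes.
-/

/-- `kClasses G` is the number of conjugacy classes of `G`. -/
noncomputable def kClasses (G : Type*) [Group G] : ℕ := Nat.card (ConjClasses G)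

/-- `mVal G` is the least positive integer `n` such that the union of any `n` distinct
non-trivial conjugacy classes of `G` together with the identity of `G` is a subgroup of `G`. -/
noncomputable def mVal (G : Type*) [Group G] : ℕ :=
  sInf {n : ℕ | 0 < n ∧ ∀ S : Finset (ConjClasses G),
    S.card = n → (∀ c ∈ S, c ≠ ConjClasses.mk (1 : G)) →
    ∃ H : Subgroup G, (H : Set G) = insert (1 : G) (⋃ c ∈ S, c.carrier)}

open Finset

def ClassUnionsAreSubgroups (G : Type*) [Group G] (n : ℕ) : Prop :=
  ∀ S : Finset (ConjClasses G), S.card = n → (∀ c ∈ S, c ≠ ConjClasses.mk (1 : G)) →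
    ∃ H : Subgroup G, (H : Set G) = insert (1 : G) (⋃ c ∈ S, c.carrier)

section

variable {G : Type*} [Group G]

/-- `k(G)` satisfies the condition vacuously, since there are only `k(G) - 1` non-trivial
classes; so `mVal G` is not the junk value `sInf ∅ = 0`. -/
theorem mVal_spec [Finite G] : 0 < mVal G ∧ ClassUnionsAreSubgroups G (mVal G) := by
  classical
  have : Fintype (ConjClasses G) := Fintype.ofFinite _
  refine Nat.sInf_mem (s := {n : ℕ | 0 < n ∧ ClassUnionsAreSubgroups G n})
    ⟨Fintype.card (ConjClasses G), Fintype.card_pos, fun S hS hS1 => absurd hS (ne_of_lt ?_)⟩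
  exact card_lt_univ_of_notMem fun h1 => hS1 _ h1 rfl

theorem mem_iff_of_coe_eq_insert_one_iUnion {H : Subgroup G} {S : Finset (ConjClasses G)}
    (hH : (H : Set G) = insert 1 (⋃ c ∈ S, c.carrier)) (g : G) :
    g ∈ H ↔ g = 1 ∨ ConjClasses.mk g ∈ S := by
  rw [← SetLike.mem_coe, hH, Set.mem_insert_iff, Set.mem_iUnion₂]
  simp only [ConjClasses.mem_carrier_iff_mk_eq, exists_prop, exists_eq_right']

theorem ConjClasses.mk_ne_mk_one {g : G} (hg : g ≠ 1) : ConjClasses.mk g ≠ ConjClasses.mk 1 :=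
  fun h => hg (isConj_one_left.mp (ConjClasses.mk_eq_mk_iff_isConj.mp h))

theorem isConj_pow_of_mVal_lt_kClasses_sub_one [Finite G] (h : mVal G < kClasses G - 1)
    {x : G} {m : ℕ} (hm : m.Coprime (orderOf x)) : IsConj x (x ^ m) := by
  classical
  have : Fintype (ConjClasses G) := Fintype.ofFinite _
  by_contra hconj
  have hx : x ≠ 1 := by rintro rfl; simp at hconj
  have hxm : x ^ m ≠ 1 := fun h1 => hx <| orderOf_eq_one_iff.mp <| by
    rw [← hm.symm.orderOf_pow, h1, orderOf_one]
  set B := (univ.erase (ConjClasses.mk 1)).erase (ConjClasses.mk (x ^ m))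
  have hxB : ConjClasses.mk x ∈ B :=
    mem_erase.mpr ⟨fun h' => hconj (ConjClasses.mk_eq_mk_iff_isConj.mp h'),
      mem_erase.mpr ⟨ConjClasses.mk_ne_mk_one hx, mem_univ _⟩⟩
  have hB : mVal G ≤ B.card := by
    rw [card_erase_of_mem (mem_erase.mpr ⟨ConjClasses.mk_ne_mk_one hxm, mem_univ _⟩),
      card_erase_of_mem (mem_univ _), card_univ, ← Nat.card_eq_fintype_card]
    exact Nat.le_sub_one_of_lt h
  obtain ⟨S, hxS, hSB, hS⟩ :=
    exists_subsuperset_card_eq (singleton_subset_iff.mpr hxB) mVal_spec.1 hB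
  obtain ⟨H, hH⟩ := mVal_spec.2 S hS fun c hc => (mem_erase.mp (mem_erase.mp (hSB hc)).2).1
  have hxmH : x ^ m ∈ H :=
    pow_mem ((mem_iff_of_coe_eq_insert_one_iUnion hH x).mpr
      (Or.inr (singleton_subset_iff.mp hxS))) m
  rcases (mem_iff_of_coe_eq_insert_one_iUnion hH _).mp hxmH with h1 | hmemS
  · exact hxm h1
  · exact (mem_erase.mp (hSB hmemS)).1 rfl

end

theorem stmt_7_general (G : Type*) [Group G] [Finite G]
    (h : mVal G < kClasses G - 1) :
    ∀ (x : G) (m : ℕ), Nat.Coprime m (orderOf x) → IsConj x (x ^ m) :=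
  fun _ _ hm => isConj_pow_of_mVal_lt_kClasses_sub_one h hm

theorem stmt_7 (G : Type*) [Group G] [Finite G]
    (hna : ¬ ∀ a b : G, a * b = b * a) (h : mVal G < kClasses G - 1) :
    ∀ (x : G) (m : ℕ), Nat.Coprime m (orderOf x) → IsConj x (x ^ m) :=
  stmt_7_general G h
end

section
/- There is no finite non-abelian group G satisfying m(G) < k(G) - 1. -/
namespace ConjClasses

def UnionsAreSubgroups (G : Type*) [Group G] (n : ℕ) : Prop :=
  ∀ S : Finset (ConjClasses G), S.card = n → (∀ c ∈ S, c ≠ ConjClasses.mk (1 : G)) →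
    ∃ H : Subgroup G, (H : Set G) = insert (1 : G) (⋃ c ∈ S, c.carrier)

/-- Each conjugacy class together with `1` is a subgroup. -/
def ClassesWithOneAreSubgroups (G : Type*) [Group G] : Prop :=
  ∀ x y : G, y ∈ Subgroup.normalClosure {x} → y = 1 ∨ IsConj x y

variable {G : Type*} [Group G]

theorem mVal_eq_sInf : mVal G = sInf {n : ℕ | 0 < n ∧ UnionsAreSubgroups G n} := rfl

theorem mk_eq_mk_one_iff {z : G} : ConjClasses.mk z = ConjClasses.mk 1 ↔ z = 1 := by
  rw [mk_eq_mk_iff_isConj, isConj_one_left]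

theorem unionsAreSubgroups_kClasses_sub_one [Finite G] :
    UnionsAreSubgroups G (kClasses G - 1) := by
  classical
  have : Fintype (ConjClasses G) := Fintype.ofFinite _
  intro S hS hS1
  have hS_eq : S = Finset.univ \ {ConjClasses.mk 1} := by
    refine Finset.eq_of_subset_of_card_le (fun c hc => by simpa using hS1 c hc) ?_
    rw [Finset.card_sdiff_of_subset (Finset.subset_univ _), Finset.card_singleton,
      Finset.card_univ, hS, kClasses, Nat.card_eq_fintype_card]
  refine ⟨⊤, (Subgroup.coe_top (G := G)).trans (Set.eq_univ_of_forall fun z => ?_).symm⟩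
  by_cases hz : z = 1
  · exact Or.inl hz
  · exact Or.inr (Set.mem_biUnion (x := ConjClasses.mk z) (by simpa [hS_eq, mk_eq_mk_one_iff])
      (mem_carrier_iff_mk_eq.2 rfl))

theorem exists_subgroup_conj_subset_not_mem [Finite G] {n : ℕ} (hU : UnionsAreSubgroups G n)
    (hn : 0 < n) (hnk : n + 2 ≤ kClasses G) {x y : G} (hx : x ≠ 1) (hy : y ≠ 1)
    (hxy : ¬IsConj x y) : ∃ H : Subgroup G, (∀ z, IsConj x z → z ∈ H) ∧ y ∉ H := by
  classical
  have : Fintype (ConjClasses G) := Fintype.ofFinite _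
  set T := Finset.univ \ {ConjClasses.mk (1 : G), ConjClasses.mk y}
  have hxT : ConjClasses.mk x ∈ T := by
    simp only [T, Finset.mem_sdiff, Finset.mem_univ, Finset.mem_insert, Finset.mem_singleton,
      mk_eq_mk_iff_isConj, isConj_one_left, true_and, not_or]
    exact ⟨hx, hxy⟩
  have hTcard : T.card = kClasses G - 2 := by
    rw [Finset.card_sdiff_of_subset (Finset.subset_univ _),
      Finset.card_pair (fun h => hy (mk_eq_mk_one_iff.1 h.symm)), Finset.card_univ, kClasses,
      Nat.card_eq_fintype_card]
  obtain ⟨S, hxS, hST, hScard⟩ := Finset.exists_subsuperset_card_eq (n := n)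
    (Finset.singleton_subset_iff.2 hxT) (by rw [Finset.card_singleton]; omega) (by omega)
  have hST' : ∀ c ∈ S, c ≠ ConjClasses.mk 1 ∧ c ≠ ConjClasses.mk y := fun c hc => by
    simpa [T] using hST hc
  obtain ⟨H, hH⟩ := hU S hScard fun c hc => (hST' c hc).1
  refine ⟨H, fun z hz => ?_, fun hyH => ?_⟩
  · rw [← SetLike.mem_coe, hH]
    exact Or.inr (Set.mem_biUnion (hxS (Finset.mem_singleton_self _))
      (mem_carrier_iff_mk_eq.2 (mk_eq_mk_iff_isConj.2 hz).symm))
  · rw [← SetLike.mem_coe, hH] at hyH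
    obtain hy1 | hyU := hyH
    · exact hy hy1
    · obtain ⟨c, hcS, hyc⟩ := Set.mem_iUnion₂.1 hyU
      exact (hST' _ hcS).2 (mem_carrier_iff_mk_eq.1 hyc).symm

theorem exists_ne_one_not_isConj [Finite G] (h : 2 < kClasses G) (x : G) :
    ∃ w : G, w ≠ 1 ∧ ¬IsConj x w := by
  classical
  have : Fintype (ConjClasses G) := Fintype.ofFinite _
  by_contra! hall
  have hsub : Finset.univ ⊆ {ConjClasses.mk (1 : G), ConjClasses.mk x} := fun c _ => by
    obtain ⟨w, rfl⟩ := c.exists_rep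
    by_cases hw : w = 1
    · simp [hw]
    · simp [mk_eq_mk_iff_isConj.2 (hall w hw).symm]
  have := (Finset.card_le_card hsub).trans Finset.card_le_two
  rw [Finset.card_univ, ← Nat.card_eq_fintype_card] at this
  unfold kClasses at h
  omega

theorem classesWithOneAreSubgroups_of_unionsAreSubgroups [Finite G] {n : ℕ}
    (hU : UnionsAreSubgroups G n) (hn : 0 < n) (hnk : n + 2 ≤ kClasses G) :
    ClassesWithOneAreSubgroups G := by
  intro x y hy
  by_cases hx : x = 1
  · rw [hx, Subgroup.normalClosure_eq_bot_iff.2 le_rfl] at hy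
    exact Or.inl hy
  by_contra! hy'
  obtain ⟨H, hxH, hyH⟩ := exists_subgroup_conj_subset_not_mem hU hn hnk hx hy'.1 hy'.2
  refine hyH ((Subgroup.closure_le H).2 (fun z hz => ?_) hy)
  obtain ⟨_, rfl, hxz⟩ := Group.mem_conjugatesOfSet_iff.1 hz
  exact hxH z hxz

namespace ClassesWithOneAreSubgroups

variable (hP : ClassesWithOneAreSubgroups G)
include hP

theorem commute_of_not_isConj {x y : G} (hxy : ¬IsConj x y) : Commute x y := by
  refine Subgroup.commute_of_normal_of_disjoint _ _ Subgroup.normalClosure_normal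
    Subgroup.normalClosure_normal ?_ x y (Subgroup.subset_normalClosure (Set.mem_singleton _))
    (Subgroup.subset_normalClosure (Set.mem_singleton _))
  refine Subgroup.disjoint_def.2 fun {z} hzx hzy => ?_
  obtain hz | hxz := hP x z hzx
  · exact hz
  obtain hz | hyz := hP y z hzy
  · exact hz
  exact absurd (hxz.trans hyz.symm) hxy

theorem commute_of_isConj {x y w : G} (hw : w ≠ 1) (hxw : ¬IsConj x w) (hxy : IsConj x y) :
    Commute x y := by
  have hyw : ¬IsConj y w := fun h => hxw (hxy.trans h)
  have hyxw : ¬IsConj y (x * w) := fun h => by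
    have hxw_mem : x * w ∈ Subgroup.normalClosure {x} :=
      Subgroup.conjugatesOfSet_subset_normalClosure
        (Group.mem_conjugatesOfSet_iff.2 ⟨x, Set.mem_singleton x, hxy.trans h⟩)
    have hw_mem : w ∈ Subgroup.normalClosure {x} := by
      simpa using Subgroup.mul_mem _
        (Subgroup.inv_mem _ (Subgroup.subset_normalClosure (Set.mem_singleton _))) hxw_mem
    exact (hP x w hw_mem).elim hw hxw
  simpa using ((hP.commute_of_not_isConj hyxw).mul_right
    (hP.commute_of_not_isConj hyw).inv_right).symm

theorem mul_comm (h : ∀ x : G, ∃ w : G, w ≠ 1 ∧ ¬IsConj x w) (a b : G) : a * b = b * a := by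
  by_cases hab : IsConj a b
  · obtain ⟨w, hw, haw⟩ := h a
    exact hP.commute_of_isConj hw haw hab
  · exact hP.commute_of_not_isConj hab

end ClassesWithOneAreSubgroups

theorem mul_comm_of_mVal_lt [Finite G] (h : mVal G < kClasses G - 1) (a b : G) :
    a * b = b * a := by
  obtain ⟨hpos, hU⟩ : mVal G ∈ {n : ℕ | 0 < n ∧ UnionsAreSubgroups G n} := by
    rw [mVal_eq_sInf]
    exact Nat.sInf_mem ⟨_, by omega, unionsAreSubgroups_kClasses_sub_one⟩
  exact (classesWithOneAreSubgroups_of_unionsAreSubgroups hU hpos (by omega)).mul_comm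
    (exists_ne_one_not_isConj (by omega)) a b

end ConjClasses

theorem stmt_11 :
    ∀ (G : Type) [Group G] [Finite G],
      (¬ ∀ a b : G, a * b = b * a) → ¬ (mVal G < kClasses G - 1) :=
  fun _ _ _ hna hlt => hna (ConjClasses.mul_comm_of_mVal_lt hlt)
end
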